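/- arXiv:2203.07375 — 2 statements merged into one kernel-verified Lean document; each statement's English description precedes it below -/
import Mathlib

section
/- Let q be a probability measure on X × {1,…,n}, let h : X → Δⁿ be a measurable classifier, and define the true transferable probability ẇ = E_{(x,y)∼q} e_y ∈ ℝⁿ and its estimate w = E_{(x,y)∼q} h(x) ∈ ℝⁿ (coordinatewise expectations). Then the estimation error of the transferable probability satisfies ‖ẇ − w‖₁ ≤ 2δ̄ + 2 Pr_{(x,y)∼q}[φ(h(x)) ≠ y], where δ̄ = E_{(x,y)∼q} δ(h(x)), δ(ŷ) = 1 − maxⱼ ŷⱼ, and φ is an argmax selector. -/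
/-! For a single sample, `‖e_y − h x‖₁ = 2 (1 − (h x)_y)` since `h x` lies in the simplex; this
is `2 δ(h x)` when the argmax label `φ (h x)` equals `y`, and at most `2 δ(h x) + 2` otherwise.
The `ℓ¹` distance between the two expectations is at most the expectation of this pointwise
distance. -/

open MeasureTheory Finset

section SimplexVector

variable {ι : Type*} [Fintype ι] [DecidableEq ι] {v : ι → ℝ}

theorem sum_abs_ite_sub_eq (hv0 : ∀ j, 0 ≤ v j) (hv1 : ∑ j, v j = 1) (y : ι) :
    ∑ c, |(if y = c then (1 : ℝ) else 0) - v c| = 2 * (1 - v y) := by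
  have hvy : v y ≤ 1 := hv1 ▸ single_le_sum (fun j _ => hv0 j) (mem_univ y)
  have hterm : ∀ c, |(if y = c then (1 : ℝ) else 0) - v c|
      = v c + if y = c then 1 - 2 * v c else 0 := fun c => by
    split_ifs with hc
    · subst hc; rw [abs_of_nonneg (by linarith)]; ring
    · rw [zero_sub, abs_neg, abs_of_nonneg (hv0 c), add_zero]
  simp only [hterm, sum_add_distrib, sum_ite_eq, mem_univ, if_true, hv1]
  ring

theorem sum_abs_ite_sub_le_of_eq_iSup (hv0 : ∀ j, 0 ≤ v j) (hv1 : ∑ j, v j = 1) {k : ι}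
    (hk : v k = ⨆ j, v j) (y : ι) :
    ∑ c, |(if y = c then (1 : ℝ) else 0) - v c|
      ≤ 2 * (1 - ⨆ j, v j) + 2 * if k ≠ y then 1 else 0 := by
  rw [sum_abs_ite_sub_eq hv0 hv1, ← hk]
  split_ifs with hky
  · have hvk : v k ≤ 1 := hv1 ▸ single_le_sum (fun j _ => hv0 j) (mem_univ k)
    linarith [hv0 y]
  · rw [not_not.mp hky]; simp

end SimplexVector

theorem sum_abs_integral_sub_le {ι Ω : Type*} [Fintype ι] [MeasurableSpace Ω] {μ : Measure Ω}
    {f g : ι → Ω → ℝ} (hf : ∀ c, Integrable (f c) μ) (hg : ∀ c, Integrable (g c) μ) :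
    ∑ c, |∫ x, f c x ∂μ - ∫ x, g c x ∂μ| ≤ ∫ x, ∑ c, |f c x - g c x| ∂μ := by
  rw [integral_finsetSum (f := fun c x => |f c x - g c x|) _ fun c _ => ((hf c).sub (hg c)).abs]
  gcongr with c
  rw [← integral_sub (hf c) (hg c)]
  exact abs_integral_le_integral_abs

theorem integral_le_integral_add_of_le_add_indicator {Ω : Type*} [MeasurableSpace Ω]
    {μ : Measure Ω} [IsFiniteMeasure μ] {f g : Ω → ℝ} {s : Set Ω} {c : ℝ}
    (hf : 0 ≤ f) (hg : Integrable g μ) (hc : 0 ≤ c) (hfg : ∀ x, f x ≤ g x + c * s.indicator 1 x) :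
    ∫ x, f x ∂μ ≤ ∫ x, g x ∂μ + c * μ.real s := by
  -- `s` need not be measurable: bound its indicator by that of a measurable hull of equal measure.
  set t := toMeasurable μ s
  have ht : MeasurableSet t := measurableSet_toMeasurable μ s
  have hct : Integrable (fun x => c * t.indicator 1 x) μ :=
    ((integrable_const (1 : ℝ)).indicator ht).const_mul c
  calc ∫ x, f x ∂μ ≤ ∫ x, (g x + c * t.indicator 1 x) ∂μ := by
        refine integral_mono_of_nonneg (.of_forall hf)
          (hg.add hct) (.of_forall fun x => (hfg x).trans ?_)
        dsimp only
        gcongr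
        · exact zero_le_one
        · exact subset_toMeasurable μ s
    _ = ∫ x, g x ∂μ + c * μ.real s := by
        rw [integral_add hg hct, integral_const_mul,
          integral_indicator_one ht, measureReal_def, measure_toMeasurable, ← measureReal_def]

theorem transferable_probability_estimation_error_general (n : ℕ)
    {X : Type*} [MeasurableSpace X]
    (q : Measure (X × Fin n)) [IsProbabilityMeasure q]
    (h : X → Fin n → ℝ) (hmeas : Measurable h)
    (hsimplex : ∀ x, (∀ j, 0 ≤ h x j ∧ h x j ≤ 1) ∧ ∑ j, h x j = 1)
    (φ : (Fin n → ℝ) → Fin n)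
    (hφ : ∀ x, h x (φ (h x)) = ⨆ j, h x j) :
    ∑ c, |(∫ p, (if p.2 = c then (1 : ℝ) else 0) ∂q) - ∫ p, h p.1 c ∂q|
      ≤ 2 * (∫ p, (1 - ⨆ j, h p.1 j) ∂q)
        + 2 * (q {p | φ (h p.1) ≠ p.2}).toReal := by
  have hcoord : ∀ c, Measurable fun p : X × Fin n => h p.1 c :=
    fun c => (measurable_pi_apply c).comp (hmeas.comp measurable_fst)
  have hlabel : ∀ c, Integrable (fun p : X × Fin n => if p.2 = c then (1 : ℝ) else 0) q :=
    fun c => Integrable.of_mem_Icc 0 1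
      (Measurable.ite (measurable_snd (measurableSet_singleton c)) measurable_const
        measurable_const).aemeasurable (.of_forall fun p => by split_ifs <;> simp)
  have hscore : ∀ c, Integrable (fun p : X × Fin n => h p.1 c) q :=
    fun c => Integrable.of_mem_Icc 0 1 (hcoord c).aemeasurable
      (.of_forall fun p => (hsimplex p.1).1 c)
  have hmargin : Integrable (fun p : X × Fin n => 2 * (1 - ⨆ j, h p.1 j)) q := by
    refine (Integrable.of_mem_Icc 0 1 ?_ (.of_forall fun p => ?_)).const_mul 2
    · exact (measurable_const.sub (Measurable.iSup hcoord)).aemeasurable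
    · rw [← hφ, Set.mem_Icc, sub_nonneg, sub_le_self_iff]
      exact ((hsimplex p.1).1 _).symm
  calc _ ≤ ∫ p, ∑ c, |(if p.2 = c then (1 : ℝ) else 0) - h p.1 c| ∂q :=
        sum_abs_integral_sub_le hlabel hscore
    _ ≤ ∫ p, 2 * (1 - ⨆ j, h p.1 j) ∂q + 2 * q.real {p | φ (h p.1) ≠ p.2} := by
        refine integral_le_integral_add_of_le_add_indicator (fun p => by positivity) hmargin
          zero_le_two fun p => ?_
        convert sum_abs_ite_sub_le_of_eq_iSup (fun j => ((hsimplex p.1).1 j).1) (hsimplex p.1).2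
          (hφ p.1) p.2 using 3
        simp [Set.indicator_apply]
    _ = _ := by rw [integral_const_mul, measureReal_def]

/-- For a probability measure `q` on `X × Fin n` and a measurable classifier
`h : X → Δⁿ`, the true transferable probability `ẇ c = E_q (e_y) c` and its estimate
`w c = E_q (h x) c` satisfy `‖ẇ − w‖₁ ≤ 2 δ̄ + 2 Pr_q[φ (h x) ≠ y]`, where
`δ̄ = E_q (1 − maxⱼ (h x) j)` and `φ` is an argmax selector. -/
theorem transferable_probability_estimation_error (n : ℕ) [NeZero n]
    {X : Type*} [MeasurableSpace X]
    (q : Measure (X × Fin n)) [IsProbabilityMeasure q]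
    (h : X → Fin n → ℝ) (hmeas : Measurable h)
    (hsimplex : ∀ x, (∀ j, 0 ≤ h x j ∧ h x j ≤ 1) ∧ ∑ j, h x j = 1)
    (φ : (Fin n → ℝ) → Fin n) (hφmeas : Measurable fun x => φ (h x))
    (hφ : ∀ x, h x (φ (h x)) = ⨆ j, h x j) :
    ∑ c, |(∫ p, (if p.2 = c then (1 : ℝ) else 0) ∂q) - ∫ p, h p.1 c ∂q|
      ≤ 2 * (∫ p, (1 - ⨆ j, h p.1 j) ∂q)
        + 2 * (q {p | φ (h p.1) ≠ p.2}).toReal :=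
  transferable_probability_estimation_error_general n q h hmeas hsimplex φ hφ
end

section
/- (Theorem 1.) Let q be a probability measure on X × {1,…,n}, let h : X → Δⁿ be a measurable classifier, and let C ⊆ {1,…,n} be such that y ∈ C for q-almost every (x, y). Suppose ε ≥ 0 and d ≥ 0 are real numbers such that the target-domain error within C is controlled by the source-domain error within C plus a distribution-discrepancy term, i.e., Pr_{(x,y)∼q}[φ(h(x)) ∈ C and φ(h(x)) ≠ y] ≤ ε + d. Then the approximation error of the transferable probability in L1 norm can be bounded as ‖ẇ − w‖₁ ≤ 2δ̄ + 2E_I(h) + 2ε + 2d, where ẇ = E_{(x,y)∼q} e_y, w = E_{(x,y)∼q} h(x), δ̄ = E_{(x,y)∼q} (1 − maxⱼ h(x)ⱼ), and E_I(h) = Pr_{(x,y)∼q}[φ(h(x)) ∉ C]. -/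
/-! For a label `y` and a prediction `v` in the simplex, `‖e_y - v‖₁ = 2 (1 - v_y)`, since the
coordinates off `y` contribute `∑_{c ≠ y} v_c = 1 - v_y`. By the triangle inequality for
integrals, `‖ẇ - w‖₁ ≤ 2 E_q[1 - h(x)_y]`. Pointwise, `1 - h(x)_y` equals `1 - maxⱼ h(x)ⱼ`
when the argmax prediction is correct and is at most `1` otherwise, so
`E_q[1 - h(x)_y] ≤ δ̄ + Pr_q[φ(h(x)) ≠ y]`; a misprediction either falls outside `C` (Type I
error) or is an error within `C`, bounded by `ε + d`. -/

open MeasureTheory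

section Simplex

variable {ι : Type*} [Fintype ι] [DecidableEq ι] {v : ι → ℝ}

theorem sum_abs_ite_sub_of_mem_stdSimplex (hv : v ∈ stdSimplex ℝ ι) (y : ι) :
    ∑ c, |(if y = c then (1 : ℝ) else 0) - v c| = 2 * (1 - v y) := by
  have hterm : ∀ c, |(if y = c then (1 : ℝ) else 0) - v c|
      = v c + if y = c then 1 - 2 * v c else 0 := by
    intro c
    split_ifs with hc
    · rw [abs_of_nonneg (by linarith [(mem_Icc_of_mem_stdSimplex hv c).2])]; ring
    · rw [zero_sub, abs_neg, abs_of_nonneg (hv.1 c), add_zero]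
  simp only [hterm, Finset.sum_add_distrib, hv.2, Finset.sum_ite_eq, Finset.mem_univ, if_true]
  ring

theorem one_sub_le_one_sub_iSup_add_ite (hv : v ∈ stdSimplex ℝ ι) {k : ι}
    (hk : v k = ⨆ j, v j) (y : ι) :
    1 - v y ≤ (1 - ⨆ j, v j) + if k ≠ y then 1 else 0 := by
  rw [← hk]
  split_ifs with hky
  · linarith [hv.1 y, (mem_Icc_of_mem_stdSimplex hv k).2]
  · rw [not_not.mp hky, add_zero]

end Simplex

theorem sum_abs_integral_le_integral_sum_abs {α ι : Type*} [MeasurableSpace α] [Fintype ι]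
    {μ : Measure α} {f : ι → α → ℝ} (hf : ∀ i, Integrable (f i) μ) :
    ∑ i, |∫ a, f i a ∂μ| ≤ ∫ a, ∑ i, |f i a| ∂μ := by
  rw [integral_finsetSum _ fun i _ => (hf i).abs]
  exact Finset.sum_le_sum fun i _ => abs_integral_le_integral_abs

section Classifier

variable {X ι : Type*} [MeasurableSpace X] [MeasurableSpace ι] [Fintype ι]
  (q : Measure (X × ι)) [IsFiniteMeasure q] {h : X → ι → ℝ}

theorem integrable_apply_of_mem_stdSimplex (hmeas : Measurable h)
    (hh : ∀ x, h x ∈ stdSimplex ℝ ι) (c : ι) :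
    Integrable (fun p : X × ι => h p.1 c) q :=
  .of_mem_Icc 0 1 ((measurable_pi_apply c).comp (hmeas.comp measurable_fst)).aemeasurable
    (ae_of_all _ fun p => mem_Icc_of_mem_stdSimplex (hh p.1) c)

theorem sum_abs_integral_ite_sub_le [MeasurableSingletonClass ι] [DecidableEq ι]
    (hmeas : Measurable h) (hh : ∀ x, h x ∈ stdSimplex ℝ ι) :
    ∑ c, |(∫ p, (if p.2 = c then (1 : ℝ) else 0) ∂q) - ∫ p, h p.1 c ∂q|
      ≤ 2 * ∫ p, (1 - h p.1 p.2) ∂q := by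
  have hlabel : ∀ c, Integrable (fun p : X × ι => if p.2 = c then (1 : ℝ) else 0) q :=
    fun c => .of_mem_Icc 0 1
      (Measurable.ite (measurable_snd (measurableSet_singleton c)) measurable_const
        measurable_const).aemeasurable
      (ae_of_all _ fun p => by split_ifs <;> simp)
  have hpred := integrable_apply_of_mem_stdSimplex q hmeas hh
  calc ∑ c, |(∫ p, (if p.2 = c then (1 : ℝ) else 0) ∂q) - ∫ p, h p.1 c ∂q|
      = ∑ c, |∫ p, ((if p.2 = c then (1 : ℝ) else 0) - h p.1 c) ∂q| := by
        simp_rw [integral_sub (hlabel _) (hpred _)]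
    _ ≤ ∫ p, ∑ c, |(if p.2 = c then (1 : ℝ) else 0) - h p.1 c| ∂q :=
        sum_abs_integral_le_integral_sum_abs fun c => (hlabel c).sub (hpred c)
    _ = 2 * ∫ p, (1 - h p.1 p.2) ∂q := by
        simp_rw [sum_abs_ite_sub_of_mem_stdSimplex (hh _), integral_const_mul]

theorem integral_one_sub_le_add_measureReal_ne [MeasurableSingletonClass ι] [DecidableEq ι]
    (hmeas : Measurable h) (hh : ∀ x, h x ∈ stdSimplex ℝ ι) {k : X → ι}
    (hkmeas : Measurable k) (hk : ∀ x, h x (k x) = ⨆ j, h x j) :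
    ∫ p, (1 - h p.1 p.2) ∂q ≤ ∫ p, (1 - ⨆ j, h p.1 j) ∂q + q.real {p | k p.1 ≠ p.2} := by
  have hmiss : MeasurableSet {p : X × ι | k p.1 ≠ p.2} :=
    (measurableSet_eq_fun (hkmeas.comp measurable_fst) measurable_snd).compl
  have htrue : Integrable (fun p : X × ι => 1 - h p.1 p.2) q :=
    .of_mem_Icc 0 1
      (measurable_from_prod_countable_left fun y =>
        show Measurable fun x => 1 - h x y from
          measurable_const.sub ((measurable_pi_apply y).comp hmeas)).aemeasurable
      (ae_of_all _ fun p => by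
        have := mem_Icc_of_mem_stdSimplex (hh p.1) p.2
        constructor <;> linarith [this.1, this.2])
  have hmax : Integrable (fun p : X × ι => 1 - ⨆ j, h p.1 j) q :=
    .of_mem_Icc 0 1
      (measurable_const.sub (Measurable.iSup fun j =>
        (measurable_pi_apply j).comp (hmeas.comp measurable_fst))).aemeasurable
      (ae_of_all _ fun p => by
        have := mem_Icc_of_mem_stdSimplex (hh p.1) (k p.1)
        rw [← hk]
        constructor <;> linarith [this.1, this.2])
  have hind : Integrable ({p : X × ι | k p.1 ≠ p.2}.indicator (1 : X × ι → ℝ)) q :=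
    (integrable_const 1).indicator hmiss
  rw [← integral_indicator_one hmiss, ← integral_add hmax hind]
  refine integral_mono htrue (hmax.add hind) fun p => ?_
  simpa [Set.indicator_apply] using one_sub_le_one_sub_iSup_add_ite (hh p.1) (hk p.1) p.2

end Classifier

theorem transferable_probability_main_bound_general (n : ℕ)
    {X : Type*} [MeasurableSpace X]
    (q : Measure (X × Fin n)) [IsProbabilityMeasure q]
    (h : X → Fin n → ℝ) (hmeas : Measurable h)
    (hsimplex : ∀ x, (∀ j, 0 ≤ h x j ∧ h x j ≤ 1) ∧ ∑ j, h x j = 1)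
    (φ : (Fin n → ℝ) → Fin n) (hφmeas : Measurable fun x => φ (h x))
    (hφ : ∀ x, h x (φ (h x)) = ⨆ j, h x j)
    (C : Finset (Fin n))
    (ε d : ℝ)
    (hbound : (q {p | φ (h p.1) ∈ C ∧ φ (h p.1) ≠ p.2}).toReal ≤ ε + d) :
    ∑ c, |(∫ p, (if p.2 = c then (1 : ℝ) else 0) ∂q) - ∫ p, h p.1 c ∂q|
      ≤ 2 * (∫ p, (1 - ⨆ j, h p.1 j) ∂q)
        + 2 * (q {p | φ (h p.1) ∉ C}).toReal + 2 * ε + 2 * d := by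
  have hh : ∀ x, h x ∈ stdSimplex ℝ (Fin n) := fun x =>
    ⟨fun j => ((hsimplex x).1 j).1, (hsimplex x).2⟩
  have hcover : {p : X × Fin n | φ (h p.1) ≠ p.2}
      ⊆ {p | φ (h p.1) ∉ C} ∪ {p | φ (h p.1) ∈ C ∧ φ (h p.1) ≠ p.2} :=
    fun p hp => (em' _).imp id fun hC => ⟨hC, hp⟩
  have hmiss := (measureReal_mono (μ := q) hcover).trans (measureReal_union_le _ _)
  have hdist := sum_abs_integral_ite_sub_le q hmeas hh
  have herr := integral_one_sub_le_add_measureReal_ne q hmeas hh hφmeas hφ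
  simp only [measureReal_def] at hmiss herr
  linarith

/-- Theorem 1 of the paper. With labels almost surely in the shared class space `C`,
and real numbers `ε ≥ 0` (the source error within `C`) and `d ≥ 0` (the HΔH
distribution discrepancy) such that the target error within `C` is controlled,
`Pr_q[φ (h x) ∈ C ∧ φ (h x) ≠ y] ≤ ε + d`, the approximation error of the
transferable probability in L1 norm can be bounded as
`‖ẇ − w‖₁ ≤ 2 δ̄ + 2 E_I(h) + 2 ε + 2 d`, where `ẇ = E_q e_y`, `w = E_q h(x)`,
`δ̄ = E_q (1 − maxⱼ (h x) j)` and `E_I(h) = Pr_q[φ (h x) ∉ C]`. -/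
theorem transferable_probability_main_bound (n : ℕ) [NeZero n]
    {X : Type*} [MeasurableSpace X]
    (q : Measure (X × Fin n)) [IsProbabilityMeasure q]
    (h : X → Fin n → ℝ) (hmeas : Measurable h)
    (hsimplex : ∀ x, (∀ j, 0 ≤ h x j ∧ h x j ≤ 1) ∧ ∑ j, h x j = 1)
    (φ : (Fin n → ℝ) → Fin n) (hφmeas : Measurable fun x => φ (h x))
    (hφ : ∀ x, h x (φ (h x)) = ⨆ j, h x j)
    (C : Finset (Fin n)) (hC : ∀ᵐ p ∂q, p.2 ∈ C)
    (ε d : ℝ) (hε : 0 ≤ ε) (hd : 0 ≤ d)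
    (hbound : (q {p | φ (h p.1) ∈ C ∧ φ (h p.1) ≠ p.2}).toReal ≤ ε + d) :
    ∑ c, |(∫ p, (if p.2 = c then (1 : ℝ) else 0) ∂q) - ∫ p, h p.1 c ∂q|
      ≤ 2 * (∫ p, (1 - ⨆ j, h p.1 j) ∂q)
        + 2 * (q {p | φ (h p.1) ∉ C}).toReal + 2 * ε + 2 * d :=
  transferable_probability_main_bound_general n q h hmeas hsimplex φ hφmeas hφ C ε d hbound
end
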